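/- arXiv:1705.09335 — 3 statements merged into one kernel-verified Lean document; each statement's English description precedes it below -/
import Mathlib

section
/- For any feasible set of jobs $S$ (i.e., $\sum_{j \in S} \mu_j + \sqrt{\sum_{j \in S} b_j} \le 1$, with all $\mu_j, b_j \ge 0$), the sum $\sum_{j \in S} f(\mu_j, b_j)$ is at most $1$, where $f(a,b) = \frac{2a + b + \sqrt{b(4a+b)}}{2}$. -/
/-! `f a b = ((√b + √(4a + b)) / 2) ^ 2`, so the cross term `√b * √(4a + b)` of `f` is where
Cauchy–Schwarz applies: summing over `S` gives `∑ f (μ j) (b j) ≤ f M B` for `M = ∑ μ j`,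
`B = ∑ b j`. Feasibility `M + √B ≤ 1` forces `√(4M + B) ≤ 2 - √B`, whence `f M B ≤ M + √B ≤ 1`. -/

open Finset

noncomputable def f (a b : ℝ) : ℝ := (2 * a + b + Real.sqrt (b * (4 * a + b))) / 2

lemma f_eq_add_sqrt_mul_sqrt {a b : ℝ} (hb : 0 ≤ b) :
    f a b = a + (b + √b * √(4 * a + b)) / 2 := by
  rw [f, Real.sqrt_mul hb]
  ring

lemma sum_f_le_f_sum {ι : Type*} (S : Finset ι) (μ b : ι → ℝ)
    (hμ : ∀ j ∈ S, 0 ≤ μ j) (hb : ∀ j ∈ S, 0 ≤ b j) :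
    ∑ j ∈ S, f (μ j) (b j) ≤ f (∑ j ∈ S, μ j) (∑ j ∈ S, b j) := by
  have hcs : ∑ j ∈ S, √(b j) * √(4 * μ j + b j)
      ≤ √(∑ j ∈ S, b j) * √(4 * ∑ j ∈ S, μ j + ∑ j ∈ S, b j) := by
    have hsq_b : ∑ j ∈ S, √(b j) ^ 2 = ∑ j ∈ S, b j :=
      sum_congr rfl fun j hj => Real.sq_sqrt (hb j hj)
    have hsq_c : ∑ j ∈ S, √(4 * μ j + b j) ^ 2 = 4 * ∑ j ∈ S, μ j + ∑ j ∈ S, b j := by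
      rw [mul_sum, ← sum_add_distrib]
      exact sum_congr rfl fun j hj => Real.sq_sqrt (by linarith [hμ j hj, hb j hj])
    simpa only [hsq_b, hsq_c] using Real.sum_mul_le_sqrt_mul_sqrt S (fun j => √(b j))
      (fun j => √(4 * μ j + b j))
  calc ∑ j ∈ S, f (μ j) (b j)
      = ∑ j ∈ S, μ j + (∑ j ∈ S, b j + ∑ j ∈ S, √(b j) * √(4 * μ j + b j)) / 2 := by
        rw [sum_congr rfl fun j hj => f_eq_add_sqrt_mul_sqrt (a := μ j) (hb j hj),
          sum_add_distrib, ← sum_div, sum_add_distrib]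
    _ ≤ f (∑ j ∈ S, μ j) (∑ j ∈ S, b j) := by
        rw [f_eq_add_sqrt_mul_sqrt (sum_nonneg hb)]
        linarith

lemma f_le_one {M B : ℝ} (hM : 0 ≤ M) (hB : 0 ≤ B) (h : M + √B ≤ 1) : f M B ≤ 1 := by
  have hs : √B ^ 2 = B := Real.sq_sqrt hB
  have hroot : √(4 * M + B) ≤ 2 - √B :=
    Real.sqrt_le_iff.mpr ⟨by linarith, by nlinarith⟩
  have hcross : √B * √(4 * M + B) ≤ √B * (2 - √B) :=
    mul_le_mul_of_nonneg_left hroot (Real.sqrt_nonneg B)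
  rw [f_eq_add_sqrt_mul_sqrt hB]
  nlinarith

theorem feasible_f_sum_le_one {ι : Type*} (S : Finset ι) (μ b : ι → ℝ)
    (hμ : ∀ j ∈ S, 0 ≤ μ j) (hb : ∀ j ∈ S, 0 ≤ b j)
    (hfeas : ∑ j ∈ S, μ j + Real.sqrt (∑ j ∈ S, b j) ≤ 1) :
    ∑ j ∈ S, f (μ j) (b j) ≤ 1 :=
  (sum_f_le_f_sum S μ b hμ hb).trans (f_le_one (sum_nonneg hμ) (sum_nonneg hb) hfeas)
end

section
/- Suppose jobs with parameters $\mu_j, b_j \ge 0$ are partitioned into $m$ nonempty sets $S_1,\dots,S_m$ such that $\mathrm{Cost}(S_i) = \sum_{j \in S_i}\mu_j + \sqrt{\sum_{j \in S_i} b_j} \ge 1 - \epsilon$ for every $i$, with $0 \le \epsilon \le 0.3$. If the jobs also admit a partition into $\mathrm{OPT}$ feasible sets (each with cost at most $1$), then $m \le \left(\frac{4}{3} + 3\epsilon\right)\mathrm{OPT}$. -/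
/-!
Give job `j` the weight `μ j + b j`. Since `√x ≤ x + 1/4`, a set of cost at least `1 - ε` has
weight at least `3/4 - ε`; since `x ≤ √x` for `x ≤ 1`, a feasible set has weight at most its
cost, hence at most `1`. Comparing the total weight of the jobs through both partitions gives
`m (3/4 - ε) ≤ OPT`, and `(3/4 - ε)(4/3 + 3ε) = 1 + ε (11/12 - 3ε) ≥ 1` for `0 ≤ ε ≤ 0.3`.
-/

open Finset

noncomputable def Cost {ι : Type*} (μ b : ι → ℝ) (S : Finset ι) : ℝ :=
  ∑ j ∈ S, μ j + Real.sqrt (∑ j ∈ S, b j)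

open Function

theorem Finset.sum_biUnion_le_sum_sum {ι κ M : Type*} [DecidableEq ι] [AddCommMonoid M]
    [PartialOrder M] [IsOrderedAddMonoid M] {s : Finset κ} {t : κ → Finset ι} {f : ι → M}
    (hf : ∀ i, 0 ≤ f i) :
    ∑ i ∈ s.biUnion t, f i ≤ ∑ k ∈ s, ∑ i ∈ t k, f i := by
  classical
  induction s using Finset.induction_on with
  | empty => simp
  | insert k s hk ih =>
    rw [biUnion_insert, sum_insert hk]
    calc ∑ i ∈ t k ∪ s.biUnion t, f i
        ≤ ∑ i ∈ t k ∪ s.biUnion t, f i + ∑ i ∈ t k ∩ s.biUnion t, f i :=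
          le_add_of_nonneg_right (sum_nonneg fun i _ => hf i)
      _ = ∑ i ∈ t k, f i + ∑ i ∈ s.biUnion t, f i := sum_union_inter
      _ ≤ ∑ i ∈ t k, f i + ∑ k ∈ s, ∑ i ∈ t k, f i := by gcongr

section Weight

variable {κ ι : Type*} [Fintype κ] {w : ι → ℝ} {J : Finset ι}

theorem card_mul_le_sum_of_pairwise_disjoint {S : κ → Finset ι} {c : ℝ}
    (hw : ∀ j, 0 ≤ w j) (hdisj : Pairwise (Disjoint on S)) (hSJ : ∀ i, S i ⊆ J)
    (hc : ∀ i, c ≤ ∑ j ∈ S i, w j) :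
    Fintype.card κ * c ≤ ∑ j ∈ J, w j := by
  classical
  calc Fintype.card κ * c
      ≤ ∑ i, ∑ j ∈ S i, w j := by simpa using card_nsmul_le_sum univ _ c fun i _ => hc i
    _ = ∑ j ∈ univ.biUnion S, w j := (sum_biUnion fun i _ i' _ h => hdisj h).symm
    _ ≤ ∑ j ∈ J, w j :=
        sum_le_sum_of_subset_of_nonneg (biUnion_subset.2 fun i _ => hSJ i) fun j _ _ => hw j

theorem sum_le_card_of_forall_exists_mem {T : κ → Finset ι}
    (hw : ∀ j, 0 ≤ w j) (hJT : ∀ j ∈ J, ∃ k, j ∈ T k) (hT : ∀ k, ∑ j ∈ T k, w j ≤ 1) :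
    ∑ j ∈ J, w j ≤ Fintype.card κ := by
  classical
  calc ∑ j ∈ J, w j
      ≤ ∑ j ∈ univ.biUnion T, w j := sum_le_sum_of_subset_of_nonneg
          (fun j hj => by simpa using hJT j hj) fun j _ _ => hw j
    _ ≤ ∑ k, ∑ j ∈ T k, w j := sum_biUnion_le_sum_sum hw
    _ ≤ ∑ _k : κ, (1 : ℝ) := sum_le_sum fun k _ => hT k
    _ = Fintype.card κ := by simp

end Weight

theorem sqrt_le_self_add_one_quarter {x : ℝ} (hx : 0 ≤ x) : √x ≤ x + 1 / 4 := by
  nlinarith [Real.sq_sqrt hx, sq_nonneg (√x - 1 / 2)]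

section Cost

variable {ι : Type*} {μ b : ι → ℝ}

theorem cost_le_sum_add_one_quarter (hb : ∀ j, 0 ≤ b j) (S : Finset ι) :
    Cost μ b S ≤ ∑ j ∈ S, (μ j + b j) + 1 / 4 := by
  rw [Cost, sum_add_distrib]
  linarith [sqrt_le_self_add_one_quarter (sum_nonneg fun j _ => hb j : 0 ≤ ∑ j ∈ S, b j)]

theorem sum_le_cost_of_cost_le_one (hμ : ∀ j, 0 ≤ μ j) (hb : ∀ j, 0 ≤ b j) {S : Finset ι}
    (hS : Cost μ b S ≤ 1) :
    ∑ j ∈ S, (μ j + b j) ≤ Cost μ b S := by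
  have hM : 0 ≤ ∑ j ∈ S, μ j := sum_nonneg fun j _ => hμ j
  have hB : 0 ≤ ∑ j ∈ S, b j := sum_nonneg fun j _ => hb j
  rw [Cost] at hS ⊢
  have hB1 : ∑ j ∈ S, b j ≤ 1 := Real.sqrt_le_one.mp (by linarith)
  rw [sum_add_distrib]
  linarith [Real.le_sqrt_self_iff.mpr hB1]

end Cost

theorem le_mul_of_mul_three_quarters_sub_le {m n ε : ℝ} (hm : 0 ≤ m) (hε0 : 0 ≤ ε)
    (hε1 : ε ≤ 0.3) (h : m * (3 / 4 - ε) ≤ n) :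
    m ≤ (4 / 3 + 3 * ε) * n := by
  have hslack : 0 ≤ 11 / 12 - 3 * ε := by norm_num at hε1 ⊢; linarith
  nlinarith [mul_nonneg (mul_nonneg hm hε0) hslack]

theorem eps_full_bound_general {ι : Type*} (μ b : ι → ℝ)
    (hμ : ∀ j, 0 ≤ μ j) (hb : ∀ j, 0 ≤ b j)
    (J : Finset ι) (m OPT : ℕ) (ε : ℝ) (hε0 : 0 ≤ ε) (hε1 : ε ≤ 0.3)
    (S : Fin m → Finset ι)
    (hSdisj : ∀ i i', i ≠ i' → Disjoint (S i) (S i'))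
    (hScover : ∀ j, j ∈ J ↔ ∃ i, j ∈ S i)
    (hfull : ∀ i, Cost μ b (S i) ≥ 1 - ε)
    (T : Fin OPT → Finset ι)
    (hTcover : ∀ j, j ∈ J ↔ ∃ i, j ∈ T i)
    (hTfeas : ∀ i, Cost μ b (T i) ≤ 1) :
    (m : ℝ) ≤ (4 / 3 + 3 * ε) * OPT := by
  have hw : ∀ j, 0 ≤ μ j + b j := fun j => add_nonneg (hμ j) (hb j)
  have lower : (m : ℝ) * (3 / 4 - ε) ≤ ∑ j ∈ J, (μ j + b j) := by
    simpa using card_mul_le_sum_of_pairwise_disjoint hw (fun i i' h => hSdisj i i' h)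
      (fun i j hj => (hScover j).2 ⟨i, hj⟩)
      fun i => by linarith [hfull i, cost_le_sum_add_one_quarter (μ := μ) hb (S i)]
  have upper : ∑ j ∈ J, (μ j + b j) ≤ OPT := by
    simpa using sum_le_card_of_forall_exists_mem hw (fun j => (hTcover j).1)
      fun k => (sum_le_cost_of_cost_le_one hμ hb (hTfeas k)).trans (hTfeas k)
  exact le_mul_of_mul_three_quarters_sub_le m.cast_nonneg hε0 hε1 (lower.trans upper)

theorem eps_full_bound {ι : Type*} (μ b : ι → ℝ)
    (hμ : ∀ j, 0 ≤ μ j) (hb : ∀ j, 0 ≤ b j)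
    (J : Finset ι) (m OPT : ℕ) (ε : ℝ) (hε0 : 0 ≤ ε) (hε1 : ε ≤ 0.3)
    (S : Fin m → Finset ι)
    (hSne : ∀ i, (S i).Nonempty)
    (hSdisj : ∀ i i', i ≠ i' → Disjoint (S i) (S i'))
    (hScover : ∀ j, j ∈ J ↔ ∃ i, j ∈ S i)
    (hfull : ∀ i, Cost μ b (S i) ≥ 1 - ε)
    (T : Fin OPT → Finset ι)
    (hTdisj : ∀ i i', i ≠ i' → Disjoint (T i) (T i'))
    (hTcover : ∀ j, j ∈ J ↔ ∃ i, j ∈ T i)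
    (hTfeas : ∀ i, Cost μ b (T i) ≤ 1) :
    (m : ℝ) ≤ (4 / 3 + 3 * ε) * OPT :=
  eps_full_bound_general μ b hμ hb J m OPT ε hε0 hε1 S hSdisj hScover hfull T hTcover hTfeas
end

section
/- Suppose the First-Fit algorithm produces machines where $n_1$ machines each hold a single job (set $S_1$ of jobs) and $n_2$ machines each hold at least two jobs (set $S_2$ of jobs), such that: (a) any pair of jobs in $S_1$ forms an infeasible set; (b) ordering the multi-job machines $M_1,\dots,M_{n_2}$ by purchase time, for each $i < n_2$ and each job $j \in M_{i+1}$, the set $M_i \cup \{j\}$ is infeasible. If the jobs admit a partition into $\mathrm{OPT}$ feasible sets, then $n_1 + n_2 \le \frac{9}{4}\mathrm{OPT} + 1$. -/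
/-!
Give job `j` the weight `μ j + b j`. Since `√s ≤ 1` implies `s ≤ √s`, a feasible set weighs
at most 1, so all jobs together weigh at most `OPT`; since `m + s ≥ m + √s - 1/4`, an infeasible
set weighs more than 3/4. Pairwise infeasibility of the single jobs puts at most one of them in each
feasible set, so `n₁ ≤ OPT`, and (for `n₁ ≥ 2`) gives them a weight of at least `3 n₁ / 8`. On the
multi-job machines, any two jobs of `M (i+1)` each overflow `M i`, so the machine weights `x i`
satisfy `2 x i + x (i+1) > 3/2`, which forces `∑ x i > (n₂ - 1) / 2`. Hence
`n₂ < 2 (OPT - 3 n₁ / 8) + 1`, and `n₂ ≤ 2 OPT` by integrality when `n₁ ≤ 1`.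
-/

open Finset

lemma add_le_one_of_add_sqrt_le_one {m s : ℝ} (hm : 0 ≤ m) (hs : 0 ≤ s)
    (h : m + √s ≤ 1) : m + s ≤ 1 := by
  have hsqrt : √s ≤ 1 := by linarith
  have : s ≤ √s := by nlinarith [Real.sq_sqrt hs, Real.sqrt_nonneg s]
  linarith

lemma three_fourths_lt_add_of_one_lt_add_sqrt {m s : ℝ} (hs : 0 ≤ s)
    (h : 1 < m + √s) : 3 / 4 < m + s := by
  nlinarith [Real.sq_sqrt hs, sq_nonneg (√s - 1 / 2)]

lemma mul_card_le_two_mul_sum_of_le_add {ι : Type*} [DecidableEq ι] {s : Finset ι}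
    {w : ι → ℝ} {c : ℝ} (hs : 2 ≤ #s) (h : ∀ i ∈ s, ∀ j ∈ s, i ≠ j → c ≤ w i + w j) :
    c * #s ≤ 2 * ∑ i ∈ s, w i := by
  have hrow : ∀ i ∈ s, (#s - 1 : ℝ) * c ≤ (#s - 2 : ℝ) * w i + ∑ j ∈ s, w j := by
    intro i hi
    have hcard : ((#(s.erase i) : ℕ) : ℝ) = #s - 1 := by
      rw [card_erase_of_mem hi, Nat.cast_sub (by omega)]; simp
    calc (#s - 1 : ℝ) * c = ∑ j ∈ s.erase i, c := by simp [hcard]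
      _ ≤ ∑ j ∈ s.erase i, (w i + w j) :=
          sum_le_sum fun j hj => h i hi j (mem_of_mem_erase hj) (ne_of_mem_erase hj).symm
      _ = (#s - 2 : ℝ) * w i + ∑ j ∈ s, w j := by
          rw [sum_add_distrib, sum_const, nsmul_eq_mul, hcard, ← add_sum_erase s w hi]; ring
  have htotal := sum_le_sum hrow
  rw [sum_add_distrib, ← mul_sum, sum_const, nsmul_eq_mul, ← mul_sum] at htotal
  simp only [sum_const, nsmul_eq_mul] at htotal
  have hs' : (2 : ℝ) ≤ #s := by exact_mod_cast hs
  nlinarith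

lemma half_mul_pred_lt_sum_range_of_chain {x : ℕ → ℝ} {n : ℕ} (hn : 2 ≤ n)
    (hx_nonneg : ∀ i, 0 ≤ x i) (hx : ∀ i, i + 1 < n → 3 / 2 < 2 * x i + x (i + 1)) :
    ((n : ℝ) - 1) / 2 < ∑ i ∈ range n, x i := by
  -- an entry below 1/2 forces the next one above 1/2 and the pair above 1
  have key : ∀ k, k + 2 ≤ n →
      ((k : ℝ) + 1) / 2 + min (x (k + 1)) (1 / 2) < ∑ i ∈ range (k + 2), x i := by
    intro k
    induction k with
    | zero =>
      intro h2
      have h01 := hx 0 (by omega)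
      simp only [sum_range_succ, sum_range_zero]
      rcases le_total (x 1) (1 / 2) with h | h
      · rw [min_eq_left h]; push_cast; linarith
      · rw [min_eq_right h]; push_cast; linarith
    | succ k ih =>
      intro hk
      have hprev := ih (by omega)
      have hlink := hx (k + 1) (by omega)
      rw [sum_range_succ]
      push_cast
      have hmin := min_le_left (x (k + 2)) (1 / 2)
      rcases le_total (x (k + 1)) (1 / 2) with h | h
      · rw [min_eq_left h] at hprev
        rw [min_eq_right (by linarith)]
        linarith
      · rw [min_eq_right h] at hprev
        linarith
  obtain ⟨k, rfl⟩ : ∃ k, n = k + 2 := ⟨n - 2, by omega⟩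
  have := key k le_rfl
  have : 0 ≤ min (x (k + 1)) (1 / 2) := le_min (hx_nonneg _) (by norm_num)
  push_cast
  linarith

namespace FirstFit

variable {ι : Type*} {μ b : ι → ℝ}

noncomputable def weight (μ b : ι → ℝ) (S : Finset ι) : ℝ :=
  ∑ j ∈ S, (μ j + b j)

@[simp] lemma weight_singleton (j : ι) : weight μ b {j} = μ j + b j :=
  sum_singleton _ j

lemma weight_pair [DecidableEq ι] {j j' : ι} (hne : j ≠ j') :
    weight μ b {j, j'} = (μ j + b j) + (μ j' + b j') :=
  sum_pair hne

lemma weight_nonneg (hμ : ∀ j, 0 ≤ μ j) (hb : ∀ j, 0 ≤ b j) (S : Finset ι) :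
    0 ≤ weight μ b S :=
  sum_nonneg fun j _ => add_nonneg (hμ j) (hb j)

lemma weight_mono (hμ : ∀ j, 0 ≤ μ j) (hb : ∀ j, 0 ≤ b j) {S S' : Finset ι} (h : S ⊆ S') :
    weight μ b S ≤ weight μ b S' :=
  sum_le_sum_of_subset_of_nonneg h fun j _ _ => add_nonneg (hμ j) (hb j)

lemma weight_union_le [DecidableEq ι] (hμ : ∀ j, 0 ≤ μ j) (hb : ∀ j, 0 ≤ b j)
    (S S' : Finset ι) : weight μ b (S ∪ S') ≤ weight μ b S + weight μ b S' := by
  rw [weight, weight, weight, ← sum_union_inter]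
  exact le_add_of_nonneg_right (sum_nonneg fun j _ => add_nonneg (hμ j) (hb j))

lemma weight_le_one_of_cost_le_one (hμ : ∀ j, 0 ≤ μ j) (hb : ∀ j, 0 ≤ b j) {S : Finset ι}
    (h : Cost μ b S ≤ 1) : weight μ b S ≤ 1 := by
  rw [weight, sum_add_distrib]
  exact add_le_one_of_add_sqrt_le_one (sum_nonneg fun j _ => hμ j)
    (sum_nonneg fun j _ => hb j) h

lemma three_fourths_lt_weight_of_one_lt_cost (hb : ∀ j, 0 ≤ b j) {S : Finset ι}
    (h : 1 < Cost μ b S) : 3 / 4 < weight μ b S := by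
  rw [weight, sum_add_distrib]
  exact three_fourths_lt_add_of_one_lt_add_sqrt (sum_nonneg fun j _ => hb j) h

lemma cost_mono (hμ : ∀ j, 0 ≤ μ j) (hb : ∀ j, 0 ≤ b j) {S S' : Finset ι} (h : S ⊆ S') :
    Cost μ b S ≤ Cost μ b S' :=
  add_le_add (sum_le_sum_of_subset_of_nonneg h fun j _ _ => hμ j)
    (Real.sqrt_le_sqrt (sum_le_sum_of_subset_of_nonneg h fun j _ _ => hb j))

lemma weight_le_card_of_subset_biUnion [DecidableEq ι] {κ : Type*} [Fintype κ]
    (hμ : ∀ j, 0 ≤ μ j) (hb : ∀ j, 0 ≤ b j) {S : Finset ι} {T : κ → Finset ι}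
    (hST : S ⊆ univ.biUnion T) (hT : ∀ i, Cost μ b (T i) ≤ 1) :
    weight μ b S ≤ Fintype.card κ := by
  calc weight μ b S ≤ weight μ b (univ.sup T) := by
        rw [sup_eq_biUnion]; exact weight_mono hμ hb hST
    _ ≤ ∑ i, weight μ b (T i) :=
        apply_sup_le_sum (by simp [weight]) (weight_union_le hμ hb _ _) univ
    _ ≤ ∑ _i : κ, (1 : ℝ) := sum_le_sum fun i _ => weight_le_one_of_cost_le_one hμ hb (hT i)
    _ = Fintype.card κ := by simp

lemma card_le_of_pairwise_one_lt_cost [DecidableEq ι] {κ : Type*} [Fintype κ]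
    (hμ : ∀ j, 0 ≤ μ j) (hb : ∀ j, 0 ≤ b j) {S : Finset ι} {T : κ → Finset ι}
    (hS : ∀ j ∈ S, ∀ j' ∈ S, j ≠ j' → 1 < Cost μ b {j, j'})
    (hST : ∀ j ∈ S, ∃ i, j ∈ T i) (hT : ∀ i, Cost μ b (T i) ≤ 1) :
    #S ≤ Fintype.card κ := by
  refine card_le_card_of_forall_subsingleton (fun j i => j ∈ T i)
    (fun j hj => (hST j hj).imp fun i hi => ⟨mem_univ i, hi⟩) fun i _ => ?_
  rintro j ⟨hj, hji⟩ j' ⟨hj', hj'i⟩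
  by_contra hne
  have hsub : ({j, j'} : Finset ι) ⊆ T i := insert_subset hji (singleton_subset_iff.mpr hj'i)
  exact (hS j hj j' hj' hne).not_ge ((cost_mono hμ hb hsub).trans (hT i))

lemma three_eighths_mul_card_le_weight [DecidableEq ι] (hb : ∀ j, 0 ≤ b j) {S : Finset ι}
    (hcard : 2 ≤ #S) (hS : ∀ j ∈ S, ∀ j' ∈ S, j ≠ j' → 1 < Cost μ b {j, j'}) :
    3 / 8 * #S ≤ weight μ b S := by
  have := mul_card_le_two_mul_sum_of_le_add (w := fun j => μ j + b j) (c := 3 / 4) hcard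
    fun j hj j' hj' hne => by
      have := three_fourths_lt_weight_of_one_lt_cost hb (hS j hj j' hj' hne)
      rw [weight_pair hne] at this
      exact this.le
  rw [weight]
  linarith

lemma three_halves_lt_of_one_lt_cost_union [DecidableEq ι] (hμ : ∀ j, 0 ≤ μ j)
    (hb : ∀ j, 0 ≤ b j) {A B : Finset ι} (hB : 2 ≤ #B)
    (h : ∀ j ∈ B, 1 < Cost μ b (A ∪ {j})) :
    3 / 2 < 2 * weight μ b A + weight μ b B := by
  obtain ⟨j, hj, j', hj', hne⟩ := one_lt_card.mp hB
  have hlight : ∀ j ∈ B, 3 / 4 < weight μ b A + (μ j + b j) := fun j hj =>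
    (three_fourths_lt_weight_of_one_lt_cost hb (h j hj)).trans_le
      ((weight_union_le hμ hb A {j}).trans_eq (by rw [weight_singleton]))
  have hpair : (μ j + b j) + (μ j' + b j') ≤ weight μ b B := by
    rw [← weight_pair hne]
    exact weight_mono hμ hb (insert_subset hj (singleton_subset_iff.mpr hj'))
  linarith [hlight j hj, hlight j' hj']

lemma half_mul_pred_lt_sum_weight [DecidableEq ι] (hμ : ∀ j, 0 ≤ μ j) (hb : ∀ j, 0 ≤ b j)
    {n : ℕ} (hn : 2 ≤ n) (M : Fin n → Finset ι) (hMcard : ∀ i, 2 ≤ #(M i))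
    (hseq : ∀ i : Fin n, ∀ h : (i : ℕ) + 1 < n,
      ∀ j ∈ M ⟨(i : ℕ) + 1, h⟩, Cost μ b (M i ∪ {j}) > 1) :
    ((n : ℝ) - 1) / 2 < ∑ i, weight μ b (M i) := by
  set x : ℕ → ℝ := fun i => if h : i < n then weight μ b (M ⟨i, h⟩) else 0
  have hsum : ∑ i, weight μ b (M i) = ∑ i ∈ range n, x i := by
    rw [← Fin.sum_univ_eq_sum_range]
    simp [x]
  rw [hsum]
  refine half_mul_pred_lt_sum_range_of_chain hn (fun i => ?_) fun i hi => ?_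
  · dsimp only [x]
    split_ifs
    exacts [weight_nonneg hμ hb _, le_rfl]
  · have := three_halves_lt_of_one_lt_cost_union hμ hb (hMcard _) (hseq ⟨i, by omega⟩ hi)
    simpa [x, hi, show i < n by omega] using this

lemma weight_union_biUnion [DecidableEq ι] {κ : Type*} [Fintype κ] (S : Finset ι)
    (M : κ → Finset ι) (hSM : ∀ i, Disjoint S (M i))
    (hM : ∀ i i', i ≠ i' → Disjoint (M i) (M i')) :
    weight μ b (S ∪ univ.biUnion M) = weight μ b S + ∑ i, weight μ b (M i) := by
  rw [weight, sum_union ((disjoint_biUnion_right _ _ _).mpr fun i _ => hSM i),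
    sum_biUnion fun i _ i' _ => hM i i']
  rfl

end FirstFit

open FirstFit

theorem firstfit_nine_fourths_general {ι : Type*} [DecidableEq ι] (μ b : ι → ℝ)
    (hμ : ∀ j, 0 ≤ μ j) (hb : ∀ j, 0 ≤ b j)
    (J S1 : Finset ι) (n2 OPT : ℕ)
    (M : Fin n2 → Finset ι)
    (hMcard : ∀ i, 2 ≤ (M i).card)
    (hMdisj : ∀ i i', i ≠ i' → Disjoint (M i) (M i'))
    (hS1M : ∀ i, Disjoint S1 (M i))
    (hcover : ∀ j, j ∈ J ↔ (j ∈ S1 ∨ ∃ i, j ∈ M i))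
    -- (a) any pair of single jobs forms an infeasible set
    (hpairs : ∀ j ∈ S1, ∀ j' ∈ S1, j ≠ j' → Cost μ b ({j, j'} : Finset ι) > 1)
    -- (b) each job of the next multi-job machine is infeasible with the previous one
    (hseq : ∀ i : Fin n2, ∀ h : (i : ℕ) + 1 < n2,
      ∀ j ∈ M ⟨(i : ℕ) + 1, h⟩, Cost μ b (M i ∪ {j}) > 1)
    (T : Fin OPT → Finset ι)
    (hTcover : ∀ j, j ∈ J ↔ ∃ i, j ∈ T i)
    (hTfeas : ∀ i, Cost μ b (T i) ≤ 1) :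
    (S1.card + n2 : ℝ) ≤ 9 / 4 * OPT + 1 := by
  have hn1 : (#S1 : ℝ) ≤ OPT := by
    have := card_le_of_pairwise_one_lt_cost hμ hb hpairs
      (fun j hj => (hTcover j).mp ((hcover j).mpr (Or.inl hj))) hTfeas
    rw [Fintype.card_fin] at this
    exact_mod_cast this
  have hW : weight μ b S1 + ∑ i, weight μ b (M i) ≤ OPT := by
    have hsub : S1 ∪ univ.biUnion M ⊆ univ.biUnion T := fun j hj => by
      have hjJ : j ∈ J := (hcover j).mpr (by simpa using hj)
      simpa using (hTcover j).mp hjJ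
    rw [← weight_union_biUnion S1 M hS1M hMdisj, ← Fintype.card_fin OPT]
    exact weight_le_card_of_subset_biUnion hμ hb hsub hTfeas
  rcases lt_or_ge n2 2 with hn2 | hn2
  · have : (n2 : ℝ) ≤ 1 := by exact_mod_cast Nat.le_of_lt_succ hn2
    linarith
  have hW2 := half_mul_pred_lt_sum_weight hμ hb hn2 M hMcard hseq
  rcases lt_or_ge #S1 2 with hS1 | hS1
  · have hn2_le : n2 ≤ 2 * OPT := by
      have : (n2 : ℝ) < 2 * OPT + 1 := by linarith [weight_nonneg hμ hb S1]
      exact Nat.le_of_lt_succ (by exact_mod_cast this)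
    have : ((#S1 + n2 : ℕ) : ℝ) ≤ (1 + 2 * OPT : ℕ) := by gcongr; omega
    push_cast at this
    linarith
  · linarith [three_eighths_mul_card_le_weight hb hS1 hpairs]

theorem firstfit_nine_fourths {ι : Type*} [DecidableEq ι] (μ b : ι → ℝ)
    (hμ : ∀ j, 0 ≤ μ j) (hb : ∀ j, 0 ≤ b j)
    (J S1 : Finset ι) (n2 OPT : ℕ)
    (M : Fin n2 → Finset ι)
    (hMcard : ∀ i, 2 ≤ (M i).card)
    (hMdisj : ∀ i i', i ≠ i' → Disjoint (M i) (M i'))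
    (hS1M : ∀ i, Disjoint S1 (M i))
    (hcover : ∀ j, j ∈ J ↔ (j ∈ S1 ∨ ∃ i, j ∈ M i))
    -- (a) any pair of single jobs forms an infeasible set
    (hpairs : ∀ j ∈ S1, ∀ j' ∈ S1, j ≠ j' → Cost μ b ({j, j'} : Finset ι) > 1)
    -- (b) each job of the next multi-job machine is infeasible with the previous one
    (hseq : ∀ i : Fin n2, ∀ h : (i : ℕ) + 1 < n2,
      ∀ j ∈ M ⟨(i : ℕ) + 1, h⟩, Cost μ b (M i ∪ {j}) > 1)
    (T : Fin OPT → Finset ι)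
    (hTdisj : ∀ i i', i ≠ i' → Disjoint (T i) (T i'))
    (hTcover : ∀ j, j ∈ J ↔ ∃ i, j ∈ T i)
    (hTfeas : ∀ i, Cost μ b (T i) ≤ 1) :
    (S1.card + n2 : ℝ) ≤ 9 / 4 * OPT + 1 :=
  firstfit_nine_fourths_general μ b hμ hb J S1 n2 OPT M hMcard hMdisj hS1M hcover hpairs hseq T
    hTcover hTfeas
end
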